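/- arXiv:1708.06106 — 7 statements merged into one kernel-verified Lean document; each statement's English description precedes it below -/
import Mathlib

section
/- The polynomial Φ(T) = ∏_{v ∈ 𝔽_q^d} (T − ℓ_v) satisfies: (1) every coefficient of Φ(T) (as a polynomial in T) is invariant under the action of every g ∈ GL_d(𝔽_q) on the variables x_1, …, x_d; (2) the coefficient of T^k in Φ(T) is zero unless k = q^j for some 0 ≤ j ≤ d, and the coefficient of T^{q^d} equals 1; (3) for 0 ≤ j ≤ d−1, the coefficient c_j of T^{q^j} is a homogeneous polynomial of degree q^d − q^j. -/
section Aux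

open Polynomial

/-- In `Fq[X]`, `∏_{a ∈ Fq} (X - a) = X^q - X`. -/
theorem dickAux_prod_X_sub_C_univ (Fq : Type*) [Field Fq] [Fintype Fq] :
    ∏ a : Fq, (X - C a) = X ^ Fintype.card Fq - X := by
  classical
  have hm : (X ^ Fintype.card Fq - X : Fq[X]).Monic := by
    apply (monic_X_pow _).sub_of_left
    rw [degree_X_pow, degree_X]
    exact_mod_cast Fintype.one_lt_card
  have hr := FiniteField.roots_X_pow_card_sub_X Fq
  have hd := FiniteField.X_pow_card_sub_X_natDegree_eq Fq (Fintype.one_lt_card (α := Fq))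
  have := prod_multiset_X_sub_C_of_monic_of_roots_card_eq hm (by rw [hr, hd]; simp)
  rw [hr] at this
  rw [← this]
  rfl

theorem dickAux_lemA {Fq : Type*} [Field Fq] [Fintype Fq] {A : Type*} [CommRing A]
    [Algebra Fq A] (s : A) :
    ∏ c : Fq, (s - algebraMap Fq A c) = s ^ Fintype.card Fq - s := by
  have := congrArg (aeval (R := Fq) s) (dickAux_prod_X_sub_C_univ Fq)
  simpa using this

theorem dickAux_lemB {Fq : Type*} [Field Fq] [Fintype Fq] {A : Type*} [CommRing A]
    [Algebra Fq A] (y w : A) :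
    ∏ c : Fq, (y - algebraMap Fq A c * w)
      = y ^ Fintype.card Fq - w ^ (Fintype.card Fq - 1) * y := by
  classical
  have hcard : 1 ≤ Fintype.card Fq := Fintype.card_pos
  have huniv : ∏ c : Fq, (MvPolynomial.X 0 - algebraMap Fq (MvPolynomial (Fin 2) Fq) c
        * MvPolynomial.X 1)
      = MvPolynomial.X 0 ^ Fintype.card Fq
        - MvPolynomial.X 1 ^ (Fintype.card Fq - 1) * MvPolynomial.X 0 := by
    set B := MvPolynomial (Fin 2) Fq
    set K := FractionRing B
    have hinj : Function.Injective (algebraMap B K) := IsFractionRing.injective B K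
    apply hinj
    push_cast [map_prod, map_sub, map_mul, map_pow]
    set y' := algebraMap B K (MvPolynomial.X 0)
    set w' := algebraMap B K (MvPolynomial.X 1)
    have hw' : w' ≠ 0 := fun h => MvPolynomial.X_ne_zero 1 (hinj (by simpa [w'] using h))
    have halg : ∀ c : Fq, algebraMap B K (algebraMap Fq B c) = algebraMap Fq K c := by
      intro c; rw [← IsScalarTower.algebraMap_apply]
    change ∏ x : Fq, (y' - algebraMap B K (algebraMap Fq B x) * w') = _
    simp only [halg]
    have hfac : ∀ c : Fq, y' - algebraMap Fq K c * w'
        = w' * (y' * w'⁻¹ - algebraMap Fq K c) := by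
      intro c; rw [mul_sub, mul_left_comm, mul_inv_cancel₀ hw', mul_one, mul_comm w']
    rw [Finset.prod_congr rfl fun c _ => hfac c, Finset.prod_mul_distrib,
      Finset.prod_const, Finset.card_univ, dickAux_lemA (y' * w'⁻¹)]
    have hws : w' * (y' * w'⁻¹) = y' := by rw [mul_left_comm, mul_inv_cancel₀ hw', mul_one]
    rw [mul_sub, ← mul_pow, hws]
    congr 1
    conv_lhs => rw [← Nat.sub_add_cancel hcard, pow_succ, mul_assoc, hws]
  have := congrArg (MvPolynomial.aeval (R := Fq) ![y, w]) huniv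
  simpa using this

/-- The key structure theorem: a product `∏_{v ∈ Fq^n} (X - ℓ_v)` over all `Fq`-linear
combinations of `z 1, …, z n` is a `q`-polynomial with top coefficient `1`. -/
theorem dickAux_lemC {Fq : Type*} [Field Fq] [Fintype Fq] {A : Type*} [CommRing A]
    [Algebra Fq A] (p : ℕ) [Fact p.Prime] [CharP A p] (m : ℕ)
    (hq : Fintype.card Fq = p ^ m) :
    ∀ (n : ℕ) (z : Fin n → A), ∃ a : ℕ → A, a n = 1 ∧
      ∏ v : Fin n → Fq, (X - C (∑ i, algebraMap Fq A (v i) * z i))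
        = ∑ j ∈ Finset.range (n + 1), C (a j) * X ^ (Fintype.card Fq ^ j) := by
  classical
  haveI : CharP A[X] p := charP_of_injective_ringHom (C_injective (R := A)) p
  have hcpow : ∀ (j : ℕ) (x y : A[X]),
      (x - y) ^ Fintype.card Fq ^ j = x ^ Fintype.card Fq ^ j - y ^ Fintype.card Fq ^ j := by
    intro j x y
    rw [hq, ← pow_mul]
    exact sub_pow_char_pow x y (m * j)
  have hcsum : ∀ (f : ℕ → A[X]) (s : Finset ℕ),
      (∑ i ∈ s, f i) ^ Fintype.card Fq = ∑ i ∈ s, f i ^ Fintype.card Fq := by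
    intro f s; rw [hq]
    simpa only [iterateFrobenius_def] using map_sum (iterateFrobenius A[X] p m) f s
  have hcq : ∀ (j : ℕ) (c : Fq), c ^ Fintype.card Fq ^ j = c :=
    fun j c => FiniteField.pow_card_pow j c
  intro n
  induction n with
  | zero =>
    intro z
    refine ⟨fun _ => 1, rfl, ?_⟩
    simp
  | succ n IH =>
    intro z
    obtain ⟨a, han, hP⟩ := IH (fun i => z i.succ)
    set q := Fintype.card Fq with hqdef
    set P : A[X] := ∏ v : Fin n → Fq, (X - C (∑ i, algebraMap Fq A (v i) * z i.succ))
      with hPdef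
    set w : A := ∑ j ∈ Finset.range (n + 1), a j * z 0 ^ q ^ j with hw
    refine ⟨fun j => (if 1 ≤ j then a (j - 1) ^ q else 0)
      - w ^ (q - 1) * (if j ≤ n then a j else 0), by simp [han], ?_⟩
    -- reindex the product
    have hre : ∏ v : Fin (n + 1) → Fq, (X - C (∑ i, algebraMap Fq A (v i) * z i))
        = ∏ c : Fq, ∏ v : Fin n → Fq,
            (X - C (algebraMap Fq A c * z 0 + ∑ i, algebraMap Fq A (v i) * z i.succ)) := by
      rw [← Fintype.prod_prod_type']
      apply Fintype.prod_equiv (Fin.consEquiv fun _ : Fin (n + 1) => Fq).symm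
      intro v
      simp [Fin.consEquiv, Fin.sum_univ_succ, Fin.tail]
    rw [hre]
    -- inner product via the substitution `X ↦ X - c·z 0`
    have hinner : ∀ c : Fq, ∏ v : Fin n → Fq,
        (X - C (algebraMap Fq A c * z 0 + ∑ i, algebraMap Fq A (v i) * z i.succ))
        = P - algebraMap Fq A[X] c * C w := by
      intro c
      set t : A[X] := X - C (algebraMap Fq A c * z 0) with ht
      have h1 : aeval (R := A) t P = ∏ v : Fin n → Fq,
          (X - C (algebraMap Fq A c * z 0 + ∑ i, algebraMap Fq A (v i) * z i.succ)) := by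
        rw [hPdef, map_prod]
        apply Finset.prod_congr rfl
        intro v _
        rw [map_sub, aeval_X, aeval_C, Polynomial.algebraMap_eq, ht, map_add]
        ring
      have h2 : aeval (R := A) t P = P - algebraMap Fq A[X] c * C w := by
        rw [hP, map_sum]
        have hexp : ∀ j : ℕ, t ^ q ^ j
            = X ^ q ^ j - C (algebraMap Fq A c) * C (z 0 ^ q ^ j) := by
          intro j
          rw [ht, hcpow j, ← C_pow, mul_pow, ← map_pow (algebraMap Fq A), hcq j, C_mul]
        have hterm : ∀ j ∈ Finset.range (n + 1),
            aeval (R := A) t (C (a j) * X ^ q ^ j)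
            = C (a j) * X ^ q ^ j - algebraMap Fq A[X] c * C (a j * z 0 ^ q ^ j) := by
          intro j _
          rw [map_mul, map_pow, aeval_X, aeval_C, Polynomial.algebraMap_eq, hexp j,
            Polynomial.algebraMap_apply, C_mul, mul_sub]
          ring
        rw [Finset.sum_congr rfl hterm, Finset.sum_sub_distrib, ← Finset.mul_sum, hw, map_sum]
      rw [← h1, h2]
    rw [Finset.prod_congr rfl fun c _ => hinner c, dickAux_lemB P (C w)]
    -- expand `P ^ q`
    have hPq : P ^ q = ∑ j ∈ Finset.range (n + 1), C (a j ^ q) * X ^ q ^ (j + 1) := by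
      rw [hP, hcsum]
      apply Finset.sum_congr rfl
      intro j _
      rw [mul_pow, ← C_pow, ← pow_mul, ← pow_succ]
    rw [hPq, hP, ← C_pow]
    rw [eq_comm]
    have hsplit : ∀ j ∈ Finset.range (n + 2), C ((if 1 ≤ j then a (j - 1) ^ q else 0)
          - w ^ (q - 1) * (if j ≤ n then a j else 0)) * X ^ q ^ j
        = C (if 1 ≤ j then a (j - 1) ^ q else 0) * X ^ q ^ j
          - C (w ^ (q - 1)) * (C (if j ≤ n then a j else 0) * X ^ q ^ j) := by
      intro j _
      rw [C_sub, C_mul]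
      ring
    rw [Finset.sum_congr rfl hsplit, Finset.sum_sub_distrib,
      Finset.sum_range_succ' (fun j => C (if 1 ≤ j then a (j - 1) ^ q else 0) * X ^ q ^ j),
      ← Finset.mul_sum, Finset.sum_range_succ
        (fun j => C (if j ≤ n then a j else 0) * X ^ q ^ j)]
    congr 1
    · rw [if_neg (by omega : ¬ 1 ≤ 0), C_0, zero_mul, add_zero]
      apply Finset.sum_congr rfl
      intro j _
      rw [if_pos (by omega : 1 ≤ j + 1), Nat.add_sub_cancel]
    · rw [if_neg (by omega : ¬ n + 1 ≤ n), C_0, zero_mul, add_zero]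
      congr 1
      apply Finset.sum_congr rfl
      intro x hx
      rw [if_pos (Nat.lt_succ_iff.mp (Finset.mem_range.mp hx))]

end Aux

section AuxH
open MvPolynomial

/-- Homogeneity of the coefficients of a product of linear factors. -/
theorem dickAux_lemH {F σ ι : Type*} [Field F] (ℓ : ι → MvPolynomial σ F)
    (hl : ∀ v, (ℓ v).IsHomogeneous 1) (s : Finset ι) :
    ∀ k m : ℕ, k + m = s.card →
      ((∏ v ∈ s, (Polynomial.X - Polynomial.C (ℓ v))).coeff k).IsHomogeneous m := by
  classical
  induction s using Finset.induction_on with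
  | empty =>
    intro k m h
    simp only [Finset.card_empty, Nat.add_eq_zero] at h
    obtain ⟨rfl, rfl⟩ := h
    simpa using isHomogeneous_one σ F
  | @insert a s ha IH =>
    intro k m hkm
    rw [Finset.card_insert_of_notMem ha] at hkm
    rw [Finset.prod_insert ha, sub_mul, Polynomial.coeff_sub, Polynomial.coeff_C_mul]
    set P := ∏ v ∈ s, (Polynomial.X - Polynomial.C (ℓ v)) with hP
    have hdeg : P.natDegree = s.card := by
      rw [hP, Polynomial.natDegree_prod_of_monic _ _
        (fun i _ => Polynomial.monic_X_sub_C (ℓ i))]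
      simp
    have hsecond : (ℓ a * P.coeff k).IsHomogeneous m := by
      rcases m with - | m'
      · have : P.coeff k = 0 := by
          apply Polynomial.coeff_eq_zero_of_natDegree_lt
          omega
        rw [this, mul_zero]
        exact isHomogeneous_zero σ F 0
      · have := (hl a).mul (IH k m' (by omega))
        rwa [add_comm] at this
    rcases k with - | k'
    · rw [Polynomial.coeff_X_mul_zero, zero_sub]
      exact hsecond.neg
    · rw [Polynomial.coeff_X_mul]
      exact (IH k' m (by omega)).sub hsecond

end AuxH


open Matrix MvPolynomial

/-- The action of `g ∈ GL_d(𝔽_q)` on `F[x_1, …, x_d]` by linear substitution of the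
variables: `x_j ↦ ∑ i, g i j • x_i`. -/
noncomputable def glAct (Fq F : Type*) [Field Fq] [Fintype Fq] [Field F] [Algebra Fq F]
    (d : ℕ) (g : GL (Fin d) Fq) :
    MvPolynomial (Fin d) F →ₐ[F] MvPolynomial (Fin d) F :=
  aeval fun j : Fin d =>
    ∑ i : Fin d, C (algebraMap Fq F ((g : Matrix (Fin d) (Fin d) Fq) i j)) * X i

/-- `Φ(T) = ∏_{v ∈ 𝔽_q^d} (T - ℓ_v)` where `ℓ_v = v_1 x_1 + ⋯ + v_d x_d`. -/
noncomputable def dicksonPhi (Fq F : Type*) [Field Fq] [Fintype Fq] [Field F] [Algebra Fq F]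
    (d : ℕ) : Polynomial (MvPolynomial (Fin d) F) :=
  ∏ v : Fin d → Fq,
    (Polynomial.X - Polynomial.C (∑ i : Fin d, C (algebraMap Fq F (v i)) * X i))

/-- Basic properties of `Φ(T) = ∏_{v ∈ 𝔽_q^d} (T - ℓ_v)`:
(1) every coefficient of `Φ` is `GL_d(𝔽_q)`-invariant;
(2) the coefficient of `T^k` vanishes unless `k = q^j` for some `0 ≤ j ≤ d`, and the
coefficient of `T^{q^d}` is `1`;
(3) for `0 ≤ j ≤ d-1`, the coefficient `c_j` of `T^{q^j}` is homogeneous of degree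
`q^d - q^j`. -/
theorem statement3 (Fq F : Type*) [Field Fq] [Fintype Fq] [Field F] [Algebra Fq F]
    (d : ℕ) (hd : 1 ≤ d) :
    (∀ (g : GL (Fin d) Fq) (k : ℕ),
        glAct Fq F d g ((dicksonPhi Fq F d).coeff k) = (dicksonPhi Fq F d).coeff k) ∧
    (∀ k : ℕ, (∀ j : ℕ, j ≤ d → k ≠ Fintype.card Fq ^ j) → (dicksonPhi Fq F d).coeff k = 0) ∧
    (dicksonPhi Fq F d).coeff (Fintype.card Fq ^ d) = 1 ∧
    (∀ j : ℕ, j < d →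
        ((dicksonPhi Fq F d).coeff (Fintype.card Fq ^ j)).IsHomogeneous
          (Fintype.card Fq ^ d - Fintype.card Fq ^ j)) := by
  classical
  set A := MvPolynomial (Fin d) F with hA
  set ℓ : (Fin d → Fq) → A := fun v => ∑ i, C (algebraMap Fq F (v i)) * X i with hℓ
  set q := Fintype.card Fq with hq
  have hq2 : 2 ≤ q := Fintype.one_lt_card
  -- characteristic setup
  obtain ⟨p, hcp⟩ := CharP.exists Fq
  haveI := hcp
  haveI hfp : Fact p.Prime := ⟨CharP.char_is_prime Fq p⟩
  haveI : CharP F p := charP_of_injective_algebraMap' Fq p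
  haveI : CharP A p := inferInstanceAs (CharP (MvPolynomial (Fin d) F) p)
  obtain ⟨m, hm⟩ := FiniteField.card Fq p
  -- representation as a q-polynomial
  obtain ⟨a, had, hrep⟩ := dickAux_lemC (A := A) p m hm.2 d (fun i => X i)
  have hldef : ∀ v : Fin d → Fq,
      (∑ i, algebraMap Fq A (v i) * X i) = ℓ v := by
    intro v
    apply Finset.sum_congr rfl
    intro i _
    rw [IsScalarTower.algebraMap_apply Fq F A, MvPolynomial.algebraMap_eq]
  have hrep' : dicksonPhi Fq F d
      = ∑ j ∈ Finset.range (d + 1), Polynomial.C (a j) * Polynomial.X ^ (q ^ j) := by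
    rw [dicksonPhi, ← hrep]
    apply Finset.prod_congr rfl
    intro v _
    rw [hldef v]
  have hcoeff : ∀ k : ℕ, (dicksonPhi Fq F d).coeff k
      = ∑ j ∈ Finset.range (d + 1), if k = q ^ j then a j else 0 := by
    intro k
    rw [hrep', Polynomial.finset_sum_coeff]
    apply Finset.sum_congr rfl
    intro j _
    rw [Polynomial.coeff_C_mul, Polynomial.coeff_X_pow, mul_ite, mul_one, mul_zero]
  have hpowinj : ∀ {i j : ℕ}, q ^ i = q ^ j → i = j :=
    fun h => Nat.pow_right_injective hq2 h
  refine ⟨?_, ?_, ?_, ?_⟩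
  · -- (1) GL-invariance
    intro g k
    set φ := glAct Fq F d g with hφ
    have hphil : ∀ v : Fin d → Fq,
        φ (ℓ v) = ℓ ((g : Matrix (Fin d) (Fin d) Fq).mulVec v) := by
      intro v
      rw [hℓ, hφ, glAct, map_sum]
      simp only [_root_.map_mul, aeval_X, aeval_C, algebraMap_eq]
      simp only [Finset.mul_sum]
      simp only [← mul_assoc, ← C_mul, ← RingHom.map_mul (algebraMap Fq F)]
      rw [Finset.sum_comm]
      apply Finset.sum_congr rfl
      intro i _
      rw [← Finset.sum_mul, ← map_sum C, ← map_sum (algebraMap Fq F), Matrix.mulVec,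
        dotProduct]
      congr 1
      simp [mul_comm]
    -- the map by `g` is a bijection on `Fq^d`
    have hbij : Function.Bijective
        (fun v : Fin d → Fq => (g : Matrix (Fin d) (Fin d) Fq).mulVec v) := by
      refine Function.bijective_iff_has_inverse.mpr
        ⟨fun v => ((g⁻¹ : GL (Fin d) Fq) : Matrix (Fin d) (Fin d) Fq).mulVec v, ?_, ?_⟩
      · intro v
        simp only [Matrix.mulVec_mulVec]
        rw [show ((g⁻¹ : GL (Fin d) Fq) : Matrix (Fin d) (Fin d) Fq)
            * (g : Matrix (Fin d) (Fin d) Fq) = 1 from g.inv_mul, Matrix.one_mulVec]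
      · intro v
        simp only [Matrix.mulVec_mulVec]
        rw [show (g : Matrix (Fin d) (Fin d) Fq)
            * ((g⁻¹ : GL (Fin d) Fq) : Matrix (Fin d) (Fin d) Fq) = 1 from g.mul_inv,
          Matrix.one_mulVec]
    have hmapped : Polynomial.map (φ : A →+* A) (dicksonPhi Fq F d) = dicksonPhi Fq F d := by
      rw [dicksonPhi, Polynomial.map_prod]
    -- hphil gives the reindexed product
      have : ∀ v : Fin d → Fq,
          Polynomial.map (φ : A →+* A) (Polynomial.X - Polynomial.C (ℓ v))
          = Polynomial.X - Polynomial.C (ℓ ((g : Matrix (Fin d) (Fin d) Fq).mulVec v)) := by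
        intro v
        rw [Polynomial.map_sub, Polynomial.map_X, Polynomial.map_C]
        congr 1
        exact congrArg Polynomial.C (hphil v)
      rw [Finset.prod_congr rfl fun v _ => this v]
      exact Fintype.prod_bijective _ hbij _ _ (fun v => rfl)
    have := Polynomial.coeff_map (φ : A →+* A) k (p := dicksonPhi Fq F d)
    rw [hmapped] at this
    exact this.symm
  · -- (2) vanishing
    intro k hk
    rw [hcoeff k]
    apply Finset.sum_eq_zero
    intro j hj
    rw [if_neg (hk j (Nat.lt_succ_iff.mp (Finset.mem_range.mp hj)))]
  · -- coefficient of X^(q^d) is 1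
    rw [hcoeff (q ^ d)]
    rw [Finset.sum_eq_single d]
    · rw [if_pos rfl, had]
    · intro j _ hjd
      rw [if_neg (fun h => hjd (hpowinj h).symm)]
    · intro h
      exact absurd (Finset.self_mem_range_succ d) h
  · -- (3) homogeneity
    intro j hj
    have hl1 : ∀ v : Fin d → Fq, (ℓ v).IsHomogeneous 1 := by
      intro v
      apply IsHomogeneous.sum
      intro i _
      simpa using (isHomogeneous_C (Fin d) (algebraMap Fq F (v i))).mul
        (isHomogeneous_X F i)
    have hcard : (Finset.univ : Finset (Fin d → Fq)).card = q ^ d := by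
      rw [Finset.card_univ, Fintype.card_fun, Fintype.card_fin]
    have hle : q ^ j ≤ q ^ d := Nat.pow_le_pow_right (by omega) (le_of_lt hj)
    have := dickAux_lemH ℓ hl1 Finset.univ (q ^ j) (q ^ d - q ^ j)
      (by rw [hcard]; omega)
    exact this
end

section
/- Assume that the set of invertible matrices belonging to H(m) is closed under matrix multiplication. Then for all indices i, j, k one has m_{ik} ≤ m_{ij} + m_{jk} or m_{ij} + m_{jk} ≥ n; equivalently, the image of π^{m_{ij} + m_{jk}} in R lies in the ideal (π^{m_{ik}}). -/
section Helpers

variable {O : Type*} [CommRing O]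

lemma mk_pow_mem_of_le {π : O} {n c s : ℕ} (h : c ≤ s ∨ n ≤ s) :
    Ideal.Quotient.mk (Ideal.span ({π ^ n} : Set O)) (π ^ s) ∈
      Ideal.span {Ideal.Quotient.mk (Ideal.span ({π ^ n} : Set O)) (π ^ c)} := by
  rw [Ideal.mem_span_singleton]
  rcases h with h | h
  · exact ⟨Ideal.Quotient.mk _ (π ^ (s - c)), by
      rw [← map_mul, ← pow_add, Nat.add_sub_cancel' h]⟩
  · have : (Ideal.Quotient.mk (Ideal.span ({π ^ n} : Set O)) (π ^ s)) = 0 := by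
      rw [Ideal.Quotient.eq_zero_iff_mem, Ideal.mem_span_singleton]
      exact pow_dvd_pow π h
    rw [this]
    exact dvd_zero _

lemma le_of_mk_pow_mem [IsDomain O] {π : O} (hπ : Irreducible π) {n c s : ℕ}
    (h : Ideal.Quotient.mk (Ideal.span ({π ^ n} : Set O)) (π ^ s) ∈
      Ideal.span {Ideal.Quotient.mk (Ideal.span ({π ^ n} : Set O)) (π ^ c)}) :
    c ≤ s ∨ n ≤ s := by
  by_contra hcon
  push_neg at hcon
  obtain ⟨h1, h2⟩ := hcon
  rw [Ideal.mem_span_singleton] at h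
  obtain ⟨x, hx⟩ := h
  obtain ⟨y, rfl⟩ := Ideal.Quotient.mk_surjective x
  rw [← map_mul, Ideal.Quotient.eq, Ideal.mem_span_singleton] at hx
  obtain ⟨z, hz⟩ := hx
  have hdvd : π ^ (s + 1) ∣ π ^ s := by
    have : π ^ s = π ^ c * y + π ^ n * z := by linear_combination hz
    rw [this]
    exact dvd_add (Dvd.dvd.mul_right (pow_dvd_pow π h1) y)
      (Dvd.dvd.mul_right (pow_dvd_pow π h2) z)
  have hne : π ^ s ≠ 0 := pow_ne_zero _ hπ.ne_zero
  rw [pow_succ] at hdvd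
  have : π ∣ 1 :=
    (mul_dvd_mul_iff_left hne).mp (by rwa [mul_one] : π ^ s * π ∣ π ^ s * 1)
  exact hπ.not_isUnit (isUnit_of_dvd_one this)

lemma isUnit_one_add_std {R : Type*} [CommRing R] {d : ℕ} {i j : Fin d} (hij : i ≠ j)
    (a : R) : IsUnit (1 + Matrix.single i j a) := by
  have hX : Matrix.single i j a * Matrix.single i j a = 0 :=
    Matrix.single_mul_single_of_ne a i j i (Ne.symm hij) a
  have h1 : (1 + Matrix.single i j a) * (1 - Matrix.single i j a) = 1 := by
    have : (1 + Matrix.single i j a) * (1 - Matrix.single i j a) =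
        1 - Matrix.single i j a * Matrix.single i j a := by noncomm_ring
    rw [this, hX, sub_zero]
  have h2 : (1 - Matrix.single i j a) * (1 + Matrix.single i j a) = 1 := by
    have : (1 - Matrix.single i j a) * (1 + Matrix.single i j a) =
        1 - Matrix.single i j a * Matrix.single i j a := by noncomm_ring
    rw [this, hX, sub_zero]
  exact ⟨⟨_, _, h1, h2⟩, rfl⟩

end Helpers


/-- `H(m)`: the set of `d × d` matrices `g` over `R = 𝒪/(π^n)` such that
`g i j - δ i j ∈ (π ^ m i j)` for all `i, j`. -/
def Hm (O : Type*) [CommRing O] (π : O) (n d : ℕ) (m : Fin d → Fin d → ℕ) :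
    Set (Matrix (Fin d) (Fin d) (O ⧸ Ideal.span ({π ^ n} : Set O))) :=
  {g | ∀ i j : Fin d,
    g i j - (1 : Matrix (Fin d) (Fin d) (O ⧸ Ideal.span ({π ^ n} : Set O))) i j ∈
      Ideal.span {Ideal.Quotient.mk (Ideal.span ({π ^ n} : Set O)) (π ^ m i j)}}

lemma mem_Hm_one_add_std (O : Type*) [CommRing O] (π : O) (n d : ℕ)
    (m : Fin d → Fin d → ℕ) (i j : Fin d) :
    (1 + Matrix.single i j
        (Ideal.Quotient.mk (Ideal.span ({π ^ n} : Set O)) (π ^ m i j))) ∈ Hm O π n d m := by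
  intro i' j'
  rw [Matrix.add_apply, add_sub_cancel_left]
  by_cases h : i = i' ∧ j = j'
  · obtain ⟨rfl, rfl⟩ := h
    rw [Matrix.single_apply_same]
    exact Ideal.mem_span_singleton_self _
  · rw [Matrix.single]
    simp only [Matrix.of_apply, if_neg h]
    exact zero_mem _

/-- If the set of invertible matrices in `H(m)` is closed under multiplication, then for all
`i, j, k` one has `m i k ≤ m i j + m j k` or `m i j + m j k ≥ n`; equivalently, the image of
`π ^ (m i j + m j k)` in `R` lies in the ideal `(π ^ m i k)`. -/
theorem statement5 (O : Type*) [CommRing O] [IsDomain O] [IsDiscreteValuationRing O]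
    (π : O) (hπ : Irreducible π)
    (n : ℕ) (hn : 1 ≤ n) (d : ℕ) (hd : 1 ≤ d)
    (m : Fin d → Fin d → ℕ) (hm : ∀ i j, m i j ≤ n)
    (hmul : ∀ g h : Matrix (Fin d) (Fin d) (O ⧸ Ideal.span ({π ^ n} : Set O)),
      g ∈ Hm O π n d m → IsUnit g → h ∈ Hm O π n d m → IsUnit h → g * h ∈ Hm O π n d m) :
    ∀ i j k : Fin d,
      (m i k ≤ m i j + m j k ∨ n ≤ m i j + m j k) ∧
      Ideal.Quotient.mk (Ideal.span ({π ^ n} : Set O)) (π ^ (m i j + m j k)) ∈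
        Ideal.span {Ideal.Quotient.mk (Ideal.span ({π ^ n} : Set O)) (π ^ m i k)} := by
  intro i j k
  have key : m i k ≤ m i j + m j k ∨ n ≤ m i j + m j k := by
    by_cases hij : i = j
    · subst hij
      exact Or.inl (Nat.le_add_left _ _)
    by_cases hjk : j = k
    · subst hjk
      exact Or.inl (Nat.le_add_right _ _)
    · -- main case
      set q : O →+* O ⧸ Ideal.span ({π ^ n} : Set O) :=
        Ideal.Quotient.mk (Ideal.span ({π ^ n} : Set O)) with hq
      set X := Matrix.single i j (q (π ^ m i j)) with hX
      set Y := Matrix.single j k (q (π ^ m j k)) with hY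
      have hg : (1 + X) ∈ Hm O π n d m := mem_Hm_one_add_std O π n d m i j
      have hh : (1 + Y) ∈ Hm O π n d m := mem_Hm_one_add_std O π n d m j k
      have hgu : IsUnit (1 + X) := isUnit_one_add_std hij _
      have hhu : IsUnit (1 + Y) := isUnit_one_add_std hjk _
      have hmem := hmul _ _ hg hgu hh hhu i k
      have hXY : X * Y = Matrix.single i k (q (π ^ m i j) * q (π ^ m j k)) :=
        Matrix.single_mul_single_same _ i j k _
      have hexp : ((1 + X) * (1 + Y)) i k - (1 : Matrix (Fin d) (Fin d) _) i k =
          q (π ^ (m i j + m j k)) := by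
        have h1 : (1 + X) * (1 + Y) = 1 + X + Y + X * Y := by noncomm_ring
        rw [h1, hXY]
        rw [Matrix.add_apply, Matrix.add_apply, Matrix.add_apply]
        have hXik : X i k = 0 := by
          rw [hX, Matrix.single]
          simp only [Matrix.of_apply]
          rw [if_neg]
          rintro ⟨-, rfl⟩; exact hjk rfl
        have hYik : Y i k = 0 := by
          rw [hY, Matrix.single]
          simp only [Matrix.of_apply]
          rw [if_neg]
          rintro ⟨rfl, -⟩; exact hij rfl
        rw [hXik, hYik, Matrix.single_apply_same, ← map_mul, ← pow_add]
        ring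
      rw [hexp] at hmem
      exact le_of_mk_pow_mem hπ hmem
  exact ⟨key, mk_pow_mem_of_le key⟩
end

section
/- Assume that the set of invertible matrices belonging to H(m) is closed under matrix multiplication. If i ≠ j are indices with m_{ij} = 0 and m_{ji} = 0, then for every index k one has m_{ik} = m_{jk} and m_{ki} = m_{kj}. -/
lemma pow_mem_span_pow_aux {O : Type*} [CommRing O] [IsDomain O] {π : O}
    (hπ : Irreducible π) {n a b : ℕ}
    (h : (Ideal.Quotient.mk (Ideal.span ({π ^ n} : Set O)) (π ^ a)) ∈
      Ideal.span {Ideal.Quotient.mk (Ideal.span ({π ^ n} : Set O)) (π ^ b)}) :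
    b ≤ a ∨ n ≤ a := by
  by_contra hc
  push_neg at hc
  obtain ⟨hab, han⟩ := hc
  rw [Ideal.mem_span_singleton] at h
  obtain ⟨c, hc⟩ := h
  obtain ⟨x, rfl⟩ := Ideal.Quotient.mk_surjective c
  rw [← map_mul, Ideal.Quotient.eq, Ideal.mem_span_singleton] at hc
  obtain ⟨y, hy⟩ := hc
  have hb : π ^ b = π ^ a * (π * π ^ (b - a - 1)) := by
    rw [← pow_succ', ← pow_add]; congr 1; omega
  have hnn : π ^ n = π ^ a * (π * π ^ (n - a - 1)) := by
    rw [← pow_succ', ← pow_add]; congr 1; omega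
  have h1 : π ^ a * 1 = π ^ a * (π * (π ^ (b - a - 1) * x + π ^ (n - a - 1) * y)) := by
    rw [hb, hnn] at hy
    linear_combination hy
  have h2 := mul_left_cancel₀ (pow_ne_zero a hπ.ne_zero) h1
  exact hπ.not_isUnit (IsUnit.of_mul_eq_one _ h2.symm)

/-- If the set of invertible matrices in `H(m)` is closed under multiplication, and
`i ≠ j` are indices with `m i j = 0` and `m j i = 0`, then for every index `k` one has
`m i k = m j k` and `m k i = m k j`. -/
theorem statement6 (O : Type*) [CommRing O] [IsDomain O] [IsDiscreteValuationRing O]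
    (π : O) (hπ : Irreducible π)
    (n : ℕ) (hn : 1 ≤ n) (d : ℕ) (hd : 1 ≤ d)
    (m : Fin d → Fin d → ℕ) (hm : ∀ i j, m i j ≤ n)
    (hmul : ∀ g h : Matrix (Fin d) (Fin d) (O ⧸ Ideal.span ({π ^ n} : Set O)),
      g ∈ Hm O π n d m → IsUnit g → h ∈ Hm O π n d m → IsUnit h → g * h ∈ Hm O π n d m)
    (i j : Fin d) (hij : i ≠ j) (hij0 : m i j = 0) (hji0 : m j i = 0) :
    ∀ k : Fin d, m i k = m j k ∧ m k i = m k j := by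
  set R := O ⧸ Ideal.span ({π ^ n} : Set O) with hR
  set mk := Ideal.Quotient.mk (Ideal.span ({π ^ n} : Set O)) with hmk
  set E : Fin d → Fin d → Matrix (Fin d) (Fin d) R :=
    fun a b => Matrix.single a b (mk (π ^ m a b)) with hEdef
  have hE : ∀ a b, (1 + E a b) ∈ Hm O π n d m := by
    intro a b p q
    simp only [Matrix.add_apply, add_sub_cancel_left, hEdef]
    by_cases h : a = p ∧ b = q
    · obtain ⟨rfl, rfl⟩ := h
      rw [Matrix.single_apply_same]
      exact Ideal.mem_span_singleton_self _
    · rw [Matrix.single_apply_of_ne _ _ _ _ _ h]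
      exact zero_mem _
  have hU : ∀ (a b : Fin d), a ≠ b → ∀ c : R, IsUnit (1 + Matrix.single a b c) := by
    intro a b hab c
    set A := Matrix.single a b c with hA
    have hsq : A * A = 0 := Matrix.single_mul_single_of_ne _ _ _ _ hab.symm _
    have h1 : (1 + A) * (1 - A) = 1 := by
      rw [mul_sub, mul_one, add_mul, one_mul, hsq, add_zero, add_sub_cancel_right]
    have h2 : (1 - A) * (1 + A) = 1 := by
      rw [mul_add, mul_one, sub_mul, one_mul, hsq, sub_zero, sub_add_cancel]
    exact ⟨⟨_, _, h1, h2⟩, rfl⟩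
  have hexp : ∀ (a b p q : Fin d),
      ((1 + E a b) * (1 + E p q)) = 1 + E a b + E p q + E a b * E p q := by
    intro a b p q; noncomm_ring
  -- diagonal entries at i and j are 0
  have hdiag : ∀ a b : Fin d, a ≠ b → m a b = 0 → m b a = 0 → m a a = 0 := by
    intro a b hab hab0 hba0
    have hprod := hmul _ _ (hE a b) (hU a b hab _) (hE b a) (hU b a hab.symm _) a a
    rw [hexp] at hprod
    simp only [hEdef, Matrix.add_apply, Matrix.single_mul_single_same,
      Matrix.single_apply_same, Matrix.one_apply_eq,
      Matrix.single_apply_of_col_ne _ _ hab.symm,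
      Matrix.single_apply_of_row_ne hab.symm] at hprod
    rw [Matrix.single_mul_single_same, Matrix.single_apply_same] at hprod
    rw [hab0, hba0, pow_zero, map_one, one_mul] at hprod
    have h1 : (mk (π ^ 0)) ∈ Ideal.span {mk (π ^ m a a)} := by
      rw [pow_zero, map_one]
      convert hprod using 2
      ring
    have := pow_mem_span_pow_aux hπ h1
    omega
  have hii : m i i = 0 := hdiag i j hij hij0 hji0
  have hjj : m j j = 0 := hdiag j i hij.symm hji0 hij0
  -- generic row inequality
  have keyrow : ∀ a b k : Fin d, a ≠ b → k ≠ a → k ≠ b → m a b = 0 →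
      m a k ≤ m b k ∨ n ≤ m b k := by
    intro a b k hab hka hkb hab0
    have hprod := hmul _ _ (hE a b) (hU a b hab _) (hE b k)
      (hU b k (fun h => hkb h.symm) _) a k
    rw [hexp] at hprod
    simp only [hEdef, Matrix.add_apply, Matrix.single_mul_single_same,
      Matrix.single_apply_same, Matrix.one_apply_ne (fun h => hka (h.symm)),
      Matrix.single_apply_of_col_ne _ _ (fun h => hkb h.symm),
      Matrix.single_apply_of_row_ne hab.symm] at hprod
    erw [Matrix.single_mul_single_same, Matrix.single_apply_same] at hprod
    rw [hab0, pow_zero, map_one, one_mul] at hprod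
    have h1 : (mk (π ^ m b k)) ∈ Ideal.span {mk (π ^ m a k)} := by
      convert hprod using 2
      ring
    exact pow_mem_span_pow_aux hπ h1
  -- generic column inequality
  have keycol : ∀ a b k : Fin d, a ≠ b → k ≠ a → k ≠ b → m a b = 0 →
      m k b ≤ m k a ∨ n ≤ m k a := by
    intro a b k hab hka hkb hab0
    have hprod := hmul _ _ (hE k a) (hU k a hka _) (hE a b) (hU a b hab _) k b
    rw [hexp] at hprod
    simp only [hEdef, Matrix.add_apply, Matrix.single_mul_single_same,
      Matrix.single_apply_same, Matrix.one_apply_ne hkb,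
      Matrix.single_apply_of_col_ne _ _ hab,
      Matrix.single_apply_of_row_ne (fun h => hka h.symm)] at hprod
    rw [hab0, pow_zero, map_one, mul_one] at hprod
    have h1 : (mk (π ^ m k a)) ∈ Ideal.span {mk (π ^ m k b)} := by
      convert hprod using 2
      ring
    exact pow_mem_span_pow_aux hπ h1
  intro k
  by_cases hki : k = i
  · subst hki
    constructor <;> omega
  · by_cases hkj : k = j
    · subst hkj
      constructor <;> omega
    · have h1 := keyrow i j k hij hki hkj hij0
      have h2 := keyrow j i k hij.symm hkj hki hji0
      have h3 := keycol i j k hij hki hkj hij0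
      have h4 := keycol j i k hij.symm hkj hki hji0
      have := hm i k; have := hm j k; have := hm k i; have := hm k j
      constructor <;> omega
end

section
/- Assume m_{ii} ≥ 1 for all i, and m_{ik} ≤ m_{ij} + m_{jk} for all i, j, k. Then every matrix in H(m) is invertible, the product of any two matrices in H(m) lies in H(m), and the inverse of any matrix in H(m) lies in H(m); in other words, H(m) is (the underlying set of) a subgroup of GL_d(R). -/
/-- If `m i i ≥ 1` for all `i` and `m i k ≤ m i j + m j k` for all `i, j, k`, then every
matrix in `H(m)` is invertible, `H(m)` is closed under products and inverses; in other
words, `H(m)` is the underlying set of a subgroup of `GL_d(R)`. -/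
theorem statement7 (O : Type*) [CommRing O] [IsDomain O] [IsDiscreteValuationRing O]
    (π : O) (hπ : Irreducible π)
    (n : ℕ) (hn : 1 ≤ n) (d : ℕ) (hd : 1 ≤ d)
    (m : Fin d → Fin d → ℕ) (hm : ∀ i j, m i j ≤ n)
    (hdiag : ∀ i, 1 ≤ m i i)
    (htri : ∀ i j k, m i k ≤ m i j + m j k) :
    (∀ g ∈ Hm O π n d m, IsUnit g) ∧
    (∀ g ∈ Hm O π n d m, ∀ h ∈ Hm O π n d m, g * h ∈ Hm O π n d m) ∧
    (∀ g ∈ Hm O π n d m, g⁻¹ ∈ Hm O π n d m) := by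
  classical
  set R := O ⧸ Ideal.span ({π ^ n} : Set O) with hRdef
  set p : R := Ideal.Quotient.mk _ π with hpdef
  -- membership in terms of divisibility
  have hmem : ∀ (g : Matrix (Fin d) (Fin d) R), g ∈ Hm O π n d m ↔
      ∀ i j, p ^ m i j ∣ (g - 1) i j := by
    intro g
    constructor
    · intro hg i j
      have := hg i j
      rw [Ideal.mem_span_singleton] at this
      simpa [Matrix.sub_apply, hpdef, map_pow] using this
    · intro hg i j
      rw [Ideal.mem_span_singleton]
      have := hg i j
      simpa [Matrix.sub_apply, hpdef, map_pow] using this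
  have pn : p ^ n = 0 := by
    rw [hpdef, ← map_pow, Ideal.Quotient.eq_zero_iff_mem]
    exact Ideal.subset_span rfl
  -- height function for the strict order `m i j = 0`
  set ρ : Fin d → ℕ := fun i => (Finset.univ.filter (fun k => m k i = 0)).card with hρdef
  have hρlt : ∀ l j, m l j = 0 → ρ l < ρ j := by
    intro l j hlj
    apply Finset.card_lt_card
    constructor
    · intro k hk
      simp only [Finset.mem_filter, Finset.mem_univ, true_and] at hk ⊢
      have := htri k l j
      omega
    · intro hsub
      have hl : l ∈ Finset.univ.filter (fun k => m k j = 0) := by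
        simp [hlj]
      have := hsub hl
      simp only [Finset.mem_filter, Finset.mem_univ, true_and] at this
      have := hdiag l
      omega
  have hρd : ∀ j, ρ j < d := by
    intro j
    have : (Finset.univ.filter (fun k => m k j = 0)) ⊂ Finset.univ := by
      rw [Finset.ssubset_univ_iff]
      intro h
      have : j ∈ Finset.univ.filter (fun k => m k j = 0) := by rw [h]; exact Finset.mem_univ j
      simp only [Finset.mem_filter, Finset.mem_univ, true_and] at this
      have := hdiag j
      omega
    simpa [hρdef] using Finset.card_lt_card this
  -- Lemma A: powers of matrices with entrywise weights
  have lemA : ∀ (F : Matrix (Fin d) (Fin d) R), (∀ i j, p ^ m i j ∣ F i j) →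
      ∀ s i j, p ^ m i j ∣ (F ^ (s + 1)) i j := by
    intro F hF s
    induction s with
    | zero => simpa using hF
    | succ s ih =>
      intro i j
      rw [pow_succ, Matrix.mul_apply]
      refine Finset.dvd_sum fun l _ => ?_
      calc p ^ m i j ∣ p ^ (m i l + m l j) := pow_dvd_pow p (htri i l j)
        _ = p ^ m i l * p ^ m l j := pow_add p _ _
        _ ∣ (F ^ (s + 1)) i l * F l j := mul_dvd_mul (ih i l) (hF l j)
  -- main construction for a fixed g
  have key : ∀ g ∈ Hm O π n d m, ∃ h, g * h = 1 ∧ h * g = 1 ∧ h ∈ Hm O π n d m := by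
    intro g hg
    set E : Matrix (Fin d) (Fin d) R := g - 1 with hEdef
    have hE : ∀ i j, p ^ m i j ∣ E i j := (hmem g).mp hg
    -- Lemma D: divisibility by p via the height function
    have lemD : ∀ s i j, ρ j < ρ i + s → p ∣ (E ^ s) i j := by
      intro s
      induction s with
      | zero =>
        intro i j hij
        have hne : i ≠ j := by rintro rfl; omega
        rw [pow_zero, Matrix.one_apply_ne hne]
        exact dvd_zero p
      | succ s ih =>
        intro i j hij
        rw [pow_succ, Matrix.mul_apply]
        refine Finset.dvd_sum fun l _ => ?_
        by_cases hml : m l j = 0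
        · have hl := hρlt l j hml
          exact Dvd.dvd.mul_right (ih i l (by omega)) _
        · have hpl : p ∣ E l j := dvd_trans (dvd_pow_self p hml) (hE l j)
          exact Dvd.dvd.mul_left hpl _
    have lemC : ∀ i j, p ∣ (E ^ d) i j := fun i j =>
      lemD d i j (by have := hρd j; omega)
    -- powers of E^d gain powers of p
    have lemNil : ∀ t i j, p ^ t ∣ ((E ^ d) ^ t) i j := by
      intro t
      induction t with
      | zero => intro i j; simp
      | succ t ih =>
        intro i j
        rw [pow_succ (E ^ d) t, Matrix.mul_apply, pow_succ p t]
        exact Finset.dvd_sum fun l _ => mul_dvd_mul (ih i l) (lemC l j)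
    have hE0 : E ^ (d * n) = 0 := by
      ext i j
      have := lemNil n i j
      rw [pn, zero_dvd_iff] at this
      rw [pow_mul]
      simpa using this
    have hnE0 : (-E) ^ (d * n) = 0 := by
      rw [neg_pow, hE0, mul_zero]
    have hKpos : 1 ≤ d * n := Nat.one_le_iff_ne_zero.mpr (by positivity)
    set h : Matrix (Fin d) (Fin d) R := ∑ k ∈ Finset.range (d * n), (-E) ^ k with hhdef
    have hgE : g = 1 - (-E) := by rw [hEdef]; abel
    have hgh : g * h = 1 := by
      rw [hgE, hhdef, mul_neg_geom_sum, hnE0, sub_zero]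
    have hhg : h * g = 1 := by
      rw [hgE, hhdef, geom_sum_mul_neg, hnE0, sub_zero]
    refine ⟨h, hgh, hhg, ?_⟩
    rw [hmem]
    intro i j
    obtain ⟨K, hK⟩ : ∃ K, d * n = K + 1 := ⟨d * n - 1, by omega⟩
    have hsplit : h = (∑ k ∈ Finset.range K, (-E) ^ (k + 1)) + (-E) ^ 0 := by
      rw [hhdef, hK, Finset.sum_range_succ']
    have : h - 1 = ∑ k ∈ Finset.range K, (-E) ^ (k + 1) := by
      rw [hsplit, pow_zero, add_sub_cancel_right]
    rw [this, Matrix.sum_apply]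
    refine Finset.dvd_sum fun k _ => ?_
    exact lemA (-E) (fun i j => (dvd_neg).mpr (hE i j)) k i j
  refine ⟨?_, ?_, ?_⟩
  · intro g hg
    obtain ⟨h, hgh, hhg, _⟩ := key g hg
    exact ⟨⟨g, h, hgh, hhg⟩, rfl⟩
  · intro g hg h hh
    rw [hmem] at hg hh ⊢
    intro i k
    have hid : g * h - 1 = (g - 1) * (h - 1) + (g - 1) + (h - 1) := by noncomm_ring
    rw [hid]
    simp only [Matrix.add_apply]
    refine dvd_add (dvd_add ?_ (hg i k)) (hh i k)
    rw [Matrix.mul_apply]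
    refine Finset.dvd_sum fun l _ => ?_
    calc p ^ m i k ∣ p ^ (m i l + m l k) := pow_dvd_pow p (htri i l k)
      _ = p ^ m i l * p ^ m l k := pow_add p _ _
      _ ∣ (g - 1) i l * (h - 1) l k := mul_dvd_mul (hg i l) (hh l k)
  · intro g hg
    obtain ⟨h, hgh, hhg, hmemh⟩ := key g hg
    rwa [Matrix.inv_eq_right_inv hgh]
end

section
/- Let K be a field of characteristic p > 0 and let M be a finite subgroup of the additive group of K. Then the polynomial f(X) = ∏_{α ∈ M} (X − α) ∈ K[X] is an additive polynomial: the identity f(X + Y) = f(X) + f(Y) holds in the polynomial ring K[X, Y]; in particular f(a + b) = f(a) + f(b) for all a, b ∈ K. -/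
open Polynomial

/-- Let `K` be a field of characteristic `p > 0` and `M` a finite subgroup of the additive
group of `K`.  Then `f(X) = ∏_{α ∈ M} (X - α)` is an additive polynomial:
`f(X + Y) = f(X) + f(Y)` in `K[X, Y]`, and in particular `f(a + b) = f(a) + f(b)` for all
`a, b ∈ K`. -/
theorem statement9 (K : Type*) [Field K] (p : ℕ) (hp : 0 < p) [CharP K p]
    (M : AddSubgroup K) [Fintype M] :
    (Polynomial.aeval (MvPolynomial.X 0 + MvPolynomial.X 1 : MvPolynomial (Fin 2) K)
        (∏ α : M, (X - C (α : K))) =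
      Polynomial.aeval (MvPolynomial.X 0 : MvPolynomial (Fin 2) K)
          (∏ α : M, (X - C (α : K))) +
        Polynomial.aeval (MvPolynomial.X 1 : MvPolynomial (Fin 2) K)
          (∏ α : M, (X - C (α : K)))) ∧
    ∀ a b : K,
      (∏ α : M, (X - C (α : K))).eval (a + b) =
        (∏ α : M, (X - C (α : K))).eval a + (∏ α : M, (X - C (α : K))).eval b := by
  classical
  set f : K[X] := ∏ α : M, (X - C (α : K)) with hf
  set n := Fintype.card M with hn
  have hn0 : 0 < n := Fintype.card_pos
  -- f is invariant under translation by elements of M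
  have hA : ∀ β : M, (Polynomial.aeval (X + C (β : K)) f : K[X]) = f := by
    intro β
    rw [hf, map_prod]
    have h1 : ∀ α : M, (Polynomial.aeval (X + C (β : K)) (X - C (α : K)) : K[X])
        = X - C (((α - β : M) : K)) := by
      intro α
      rw [map_sub, Polynomial.aeval_X, Polynomial.aeval_C, Polynomial.algebraMap_eq,
        AddSubgroup.coe_sub, C_sub]
      ring
    simp only [h1]
    exact Fintype.prod_equiv (Equiv.subRight β) _ _ (fun α => rfl)
  -- f has every element of M as a root
  have hroot : ∀ β : M, f.eval ((β : K)) = 0 := by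
    intro β
    rw [hf, Polynomial.eval_prod]
    exact Finset.prod_eq_zero (Finset.mem_univ β) (by simp)
  -- aeval (C X) f = C f
  have hCX : (Polynomial.aeval (C X : Polynomial K[X]) f) = C f := by
    have h0 := (Polynomial.aeval_algHom_apply (CAlgHom (R := K) (A := K[X])) X f)
    rw [aeval_X_left_apply] at h0
    exact h0
  have hCb : ∀ β : M, (Polynomial.aeval (C ((β : K)) : K[X]) f : K[X]) = 0 := by
    intro β
    have h0 := (Polynomial.aeval_algHom_apply (CAlgHom (R := K) (A := K)) ((β : K)) f)
    have h1 : (Polynomial.aeval ((β : K)) f : K) = 0 := by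
      simp only [coe_aeval_eq_eval]; exact hroot β
    rw [h1, map_zero] at h0
    exact h0
  -- the key identity in K[X][Y]
  have key : (Polynomial.aeval (C X + X : Polynomial K[X]) f)
      = Polynomial.aeval (C X : Polynomial K[X]) f
        + Polynomial.aeval (X : Polynomial K[X]) f := by
    set G : Polynomial K[X] := Polynomial.aeval (C X + X : Polynomial K[X]) f
      - Polynomial.aeval (C X : Polynomial K[X]) f
      - Polynomial.aeval (X : Polynomial K[X]) f with hG
    have hGroots : ∀ β : M, G.eval (C ((β : K))) = 0 := by
      intro β
      set E : Polynomial K[X] →ₐ[K] K[X] :=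
        (Polynomial.aeval (C ((β : K)) : K[X])).restrictScalars K with hEdef
      have hE : ∀ q : Polynomial K[X], q.eval (C ((β : K))) = E q := by
        intro q
        rw [hEdef, AlgHom.restrictScalars_apply, coe_aeval_eq_eval]
      rw [hG, eval_sub, eval_sub, hE, hE, hE,
        ← Polynomial.aeval_algHom_apply E _ f, ← Polynomial.aeval_algHom_apply E _ f,
        ← Polynomial.aeval_algHom_apply E _ f]
      have e1 : E (C X + X : Polynomial K[X]) = X + C ((β : K)) := by
        rw [hEdef]; simp
      have e2 : E (C X : Polynomial K[X]) = X := by rw [hEdef]; simp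
      have e3 : E (X : Polynomial K[X]) = C ((β : K)) := by rw [hEdef]; simp
      rw [e1, e2, e3, hA β, aeval_X_left_apply, hCb β]
      ring
    -- degree bound
    have hP : Polynomial.aeval (C X + X : Polynomial K[X]) f
        = ∏ α : M, (X + C (X - C (α : K))) := by
      rw [hf, map_prod]
      refine Finset.prod_congr rfl fun α _ => ?_
      rw [map_sub, Polynomial.aeval_X, Polynomial.aeval_C]
      have : algebraMap K (Polynomial K[X]) (α : K) = C (C (α : K)) := rfl
      rw [this, C_sub]
      ring
    have hQ : Polynomial.aeval (X : Polynomial K[X]) f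
        = ∏ α : M, (X - C (C (α : K))) := by
      rw [hf, map_prod]
      refine Finset.prod_congr rfl fun α _ => ?_
      rw [map_sub, Polynomial.aeval_X, Polynomial.aeval_C]
      rfl
    have hPm : (∏ α : M, (X + C (X - C (α : K))) : Polynomial K[X]).Monic :=
      monic_prod_of_monic _ _ fun α _ => monic_X_add_C _
    have hQm : (∏ α : M, (X - C (C (α : K))) : Polynomial K[X]).Monic :=
      monic_prod_of_monic _ _ fun α _ => monic_X_sub_C _
    have hPd : (∏ α : M, (X + C (X - C (α : K))) : Polynomial K[X]).degree = n := by
      rw [degree_prod, Finset.sum_congr rfl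
        (fun (α : M) _ => degree_X_add_C (X - C (α : K)))]
      simp [hn]
    have hQd : (∏ α : M, (X - C (C (α : K))) : Polynomial K[X]).degree = n := by
      rw [degree_prod, Finset.sum_congr rfl
        (fun (α : M) _ => degree_X_sub_C (C (α : K)))]
      simp [hn]
    have hsub : ((∏ α : M, (X + C (X - C (α : K)))) - ∏ α : M, (X - C (C (α : K)))
        : Polynomial K[X]).degree < n := by
      calc _ < (∏ α : M, (X + C (X - C (α : K))) : Polynomial K[X]).degree :=
            degree_sub_lt (hPd.trans hQd.symm) hPm.ne_zero
              (by rw [hPm.leadingCoeff, hQm.leadingCoeff])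
        _ = n := hPd
    have hCf : (Polynomial.aeval (C X : Polynomial K[X]) f).degree < n := by
      rw [hCX]
      exact lt_of_le_of_lt (degree_C_le) (by exact_mod_cast hn0)
    have hGd : G.degree < n := by
      have h2 : G = ((∏ α : M, (X + C (X - C (α : K)))) - ∏ α : M, (X - C (C (α : K))))
          - Polynomial.aeval (C X : Polynomial K[X]) f := by
        rw [hG, hP, hQ]; ring
      rw [h2]
      exact lt_of_le_of_lt (degree_sub_le _ _) (max_lt hsub hCf)
    have hG0 : G = 0 := by
      by_cases h : G = 0
      · exact h
      · refine eq_zero_of_natDegree_lt_card_of_eval_eq_zero G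
          (f := fun β : M => (C ((β : K)) : K[X])) ?_ hGroots ?_
        · intro a b hab
          exact Subtype.ext (C_injective (by exact_mod_cast hab))
        · rw [← hn]
          exact (natDegree_lt_iff_degree_lt h).2 hGd
    rw [hG, sub_sub, sub_eq_zero] at hG0
    exact hG0
  -- transfer to MvPolynomial
  set ψ : Polynomial K[X] →ₐ[K] MvPolynomial (Fin 2) K := Polynomial.aevalTower
    (Polynomial.aeval (MvPolynomial.X 0) : K[X] →ₐ[K] MvPolynomial (Fin 2) K)
    (MvPolynomial.X 1) with hψ
  have part1 : (Polynomial.aeval (MvPolynomial.X 0 + MvPolynomial.X 1 : MvPolynomial (Fin 2) K) f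
      = Polynomial.aeval (MvPolynomial.X 0 : MvPolynomial (Fin 2) K) f
        + Polynomial.aeval (MvPolynomial.X 1 : MvPolynomial (Fin 2) K) f) := by
    have h3 := congrArg ψ key
    rw [map_add, ← Polynomial.aeval_algHom_apply, ← Polynomial.aeval_algHom_apply,
      ← Polynomial.aeval_algHom_apply] at h3
    have e1 : ψ (C X + X : Polynomial K[X]) = MvPolynomial.X 0 + MvPolynomial.X 1 := by
      rw [hψ]; simp [aevalTower_C, aevalTower_X]
    have e2 : ψ (C X : Polynomial K[X]) = MvPolynomial.X 0 := by
      rw [hψ]; simp [aevalTower_C]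
    have e3 : ψ (X : Polynomial K[X]) = MvPolynomial.X 1 := by
      rw [hψ]; simp [aevalTower_X]
    rwa [e1, e2, e3] at h3
  refine ⟨part1, fun a b => ?_⟩
  set χ : MvPolynomial (Fin 2) K →ₐ[K] K :=
    MvPolynomial.aeval (fun i : Fin 2 => if i = 0 then a else b) with hχ
  have h4 := congrArg χ part1
  rw [map_add, ← Polynomial.aeval_algHom_apply, ← Polynomial.aeval_algHom_apply,
    ← Polynomial.aeval_algHom_apply, map_add] at h4
  simp only [hχ, MvPolynomial.aeval_X] at h4
  norm_num at h4
  simpa [coe_aeval_eq_eval] using h4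
end

section
/- Let q be a prime power, K a field containing 𝔽_q, and W ⊆ K a finite 𝔽_q-linear subspace of K (viewed as an 𝔽_q-vector space). Then the polynomial f(X) = ∏_{w ∈ W}(X − w) ∈ K[X] is 𝔽_q-linear: f(c·a + b) = c·f(a) + f(b) for all c ∈ 𝔽_q and all a, b ∈ K. -/
open Polynomial

/-- Let `𝔽_q ⊆ K` be fields with `𝔽_q` finite, and let `W ⊆ K` be a finite `𝔽_q`-linear
subspace of `K`.  Then `f(X) = ∏_{w ∈ W} (X - w)` is an `𝔽_q`-linear polynomial:
`f(c·a + b) = c·f(a) + f(b)` for all `c ∈ 𝔽_q` and `a, b ∈ K`. -/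
theorem statement10 (Fq : Type*) [Field Fq] [Fintype Fq]
    (K : Type*) [Field K] [Algebra Fq K]
    (W : Submodule Fq K) [Fintype W] :
    ∀ (c : Fq) (a b : K),
      (∏ w : W, (X - C (w : K))).eval (algebraMap Fq K c * a + b) =
        algebraMap Fq K c * (∏ w : W, (X - C (w : K))).eval a +
          (∏ w : W, (X - C (w : K))).eval b := by
  intro c a b
  set f : K[X] := ∏ w : W, (X - C (w : K)) with hf
  have hWinj : Function.Injective ((↑) : W → K) := Subtype.val_injective
  have hmonic : f.Monic := monic_prod_of_monic _ _ fun w _ => monic_X_sub_C _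
  have hn : f.natDegree = Fintype.card W := by
    rw [hf, natDegree_prod _ _ (fun w _ => X_sub_C_ne_zero _)]
    simp [natDegree_X_sub_C]
  have hnpos : 0 < Fintype.card W := Fintype.card_pos
  have evalf : ∀ x : K, f.eval x = ∏ w : W, (x - (w : K)) := by
    intro x; simp [hf, eval_prod]
  have hroot : ∀ w : W, f.eval (w : K) = 0 := by
    intro w
    rw [evalf]
    exact Finset.prod_eq_zero (Finset.mem_univ w) (by simp)
  -- translation invariance
  have hshift : ∀ (x : K) (w : W), f.eval (x + (w : K)) = f.eval x := by
    intro x w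
    rw [evalf, evalf]
    calc ∏ u : W, (x + (w : K) - (u : K))
        = ∏ u : W, (x + (w : K) - ((Equiv.addRight w) u : K)) :=
          (Equiv.prod_comp (Equiv.addRight w) (fun u : W => x + (w : K) - (u : K))).symm
      _ = ∏ u : W, (x - (u : K)) := by
          apply Finset.prod_congr rfl
          intro u _
          simp [Equiv.addRight]
  -- additivity
  have hadd : ∀ x y : K, f.eval (x + y) = f.eval x + f.eval y := by
    intro x y
    have key : f.comp (X + C x) - f - C (f.eval x) = 0 := by
      rcases eq_or_ne (f.comp (X + C x) - f - C (f.eval x)) 0 with h | h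
      · exact h
      · apply Polynomial.eq_zero_of_natDegree_lt_card_of_eval_eq_zero _ hWinj
        · intro w
          simp only [eval_sub, eval_comp, eval_add, eval_X, eval_C]
          rw [add_comm ((w : K)) x, hshift x w, hroot w]
          ring
        · rw [natDegree_lt_iff_degree_lt h]
          have hdeg : (f.comp (X + C x)).degree = f.degree := by
            rw [degree_eq_natDegree (hmonic.comp_X_add_C x).ne_zero,
              degree_eq_natDegree hmonic.ne_zero, natDegree_comp, natDegree_X_add_C, mul_one]
          have hlc : (f.comp (X + C x)).leadingCoeff = f.leadingCoeff :=
            ((hmonic.comp_X_add_C x).leadingCoeff).trans hmonic.leadingCoeff.symm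
          have h1 : (f.comp (X + C x) - f).degree < (Fintype.card W : ℕ) := by
            calc (f.comp (X + C x) - f).degree
                < (f.comp (X + C x)).degree :=
                  Polynomial.degree_sub_lt hdeg (hmonic.comp_X_add_C x).ne_zero hlc
              _ = ((Fintype.card W : ℕ) : WithBot ℕ) := by
                  rw [degree_eq_natDegree (hmonic.comp_X_add_C x).ne_zero, natDegree_comp,
                    natDegree_X_add_C, mul_one, hn]
          have h2 : (C (f.eval x)).degree < (Fintype.card W : ℕ) :=
            lt_of_le_of_lt (degree_C_le) (by exact_mod_cast WithBot.coe_lt_coe.mpr hnpos)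
          exact lt_of_le_of_lt (degree_sub_le _ _) (max_lt h1 h2)
    have := congrArg (Polynomial.eval y) key
    simp only [eval_sub, eval_comp, eval_add, eval_X, eval_C, eval_zero] at this
    have h' : f.eval (y + x) = f.eval y + f.eval x := by linear_combination this
    rw [add_comm x y, h', add_comm]
  -- scaling
  have hsc : f.eval (algebraMap Fq K c * a) = algebraMap Fq K c * f.eval a := by
    rcases eq_or_ne c 0 with rfl | hc
    · simp [hroot ⟨0, W.zero_mem⟩]
    · set C' : K := algebraMap Fq K c with hC'
      have halg : (algebraMap Fq K) c ≠ 0 := by simp [hc]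
      let e : W ≃ W :=
        { toFun := fun u => ⟨C' * (u : K), by
            rw [hC', ← Algebra.smul_def]; exact W.smul_mem c u.2⟩
          invFun := fun u => ⟨(algebraMap Fq K c⁻¹) * (u : K), by
            rw [← Algebra.smul_def]; exact W.smul_mem _ u.2⟩
          left_inv := fun u => by
            ext
            simp [hC', map_inv₀, ← mul_assoc, inv_mul_cancel₀ halg, mul_inv_cancel₀ halg]
          right_inv := fun u => by
            ext
            simp [hC', map_inv₀, ← mul_assoc, inv_mul_cancel₀ halg, mul_inv_cancel₀ halg] }
      have hpow : C' ^ Fintype.card W = C' := by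
        rw [hC', ← map_pow]
        congr 1
        rw [Module.card_eq_pow_finrank (K := Fq) (V := W)]
        exact FiniteField.pow_card_pow _ _
      calc f.eval (C' * a)
          = ∏ u : W, (C' * a - (u : K)) := evalf _
        _ = ∏ u : W, (C' * a - (e u : K)) :=
            (Equiv.prod_comp e (fun u : W => C' * a - (u : K))).symm
        _ = ∏ u : W, (C' * (a - (u : K))) := by
            apply Finset.prod_congr rfl
            intro u _
            show C' * a - C' * (u : K) = _
            ring
        _ = C' ^ Fintype.card W * ∏ u : W, (a - (u : K)) := by
            rw [Finset.prod_mul_distrib, Finset.prod_const, Finset.card_univ]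
        _ = C' * f.eval a := by rw [hpow, evalf]
  rw [hadd, hsc]
end

section
/- Assume that the set of invertible matrices belonging to H(m) is closed under matrix multiplication. Define a relation ∼ on {1, …, d} by: i ∼ j if and only if i = j, or (m_{ij} = 0 and m_{ji} = 0). Then: (1) ∼ is an equivalence relation; (2) the relation on equivalence classes given by [i] ≤ [j] if and only if i = j or m_{ij} = 0 is well defined and is a partial order on the quotient set {1, …, d}/∼; and (3) if m_{ii} ≥ 1, then the equivalence class of i is the singleton {i}. -/
/-- Suppose the set of invertible matrices in `H(m)` is closed under multiplication.
Define `i ∼ j` iff `i = j` or (`m i j = 0` and `m j i = 0`).  Then: (1) `∼` is an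
equivalence relation; (2) the relation `[i] ≤ [j] ↔ (i = j ∨ m i j = 0)` is well defined
on the quotient set and is a partial order there; (3) if `m i i ≥ 1` then the equivalence
class of `i` is the singleton `{i}`. -/
theorem statement12 (O : Type*) [CommRing O] [IsDomain O] [IsDiscreteValuationRing O]
    (π : O) (hπ : Irreducible π)
    (n : ℕ) (hn : 1 ≤ n) (d : ℕ) (hd : 1 ≤ d)
    (m : Fin d → Fin d → ℕ) (hm : ∀ i j, m i j ≤ n)
    (hmul : ∀ g h : Matrix (Fin d) (Fin d) (O ⧸ Ideal.span ({π ^ n} : Set O)),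
      g ∈ Hm O π n d m → IsUnit g → h ∈ Hm O π n d m → IsUnit h → g * h ∈ Hm O π n d m) :
    ∃ heqv : Equivalence (fun i j : Fin d => i = j ∨ (m i j = 0 ∧ m j i = 0)),
      ∃ le : Quotient (Setoid.mk (fun i j : Fin d => i = j ∨ (m i j = 0 ∧ m j i = 0)) heqv) →
             Quotient (Setoid.mk (fun i j : Fin d => i = j ∨ (m i j = 0 ∧ m j i = 0)) heqv) →
             Prop,
        (∀ i j : Fin d,
          le (Quotient.mk (Setoid.mk (fun i j : Fin d => i = j ∨ (m i j = 0 ∧ m j i = 0)) heqv) i)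
             (Quotient.mk (Setoid.mk (fun i j : Fin d => i = j ∨ (m i j = 0 ∧ m j i = 0)) heqv) j)
            ↔ (i = j ∨ m i j = 0)) ∧
        IsPartialOrder _ le ∧
        (∀ i : Fin d, 1 ≤ m i i →
          ∀ j : Fin d, (i = j ∨ (m i j = 0 ∧ m j i = 0)) → j = i) := by
  set I : Ideal O := Ideal.span ({π ^ n} : Set O) with hI
  set R := O ⧸ I
  -- Key fact: 1 is not in the ideal generated by π^a when a ≥ 1.
  have keyA : ∀ a : ℕ, (1 : R) ∈ Ideal.span {Ideal.Quotient.mk I (π ^ a)} → a = 0 := by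
    intro a h1
    by_contra ha
    have ha1 : a ≠ 0 := ha
    have htop : Ideal.span {Ideal.Quotient.mk I (π ^ a)} = ⊤ :=
      (Ideal.eq_top_iff_one _).2 h1
    have hu : IsUnit (Ideal.Quotient.mk I (π ^ a)) :=
      Ideal.span_singleton_eq_top.mp htop
    obtain ⟨b, hb⟩ := hu.exists_right_inv
    obtain ⟨c, rfl⟩ := Ideal.Quotient.mk_surjective b
    have : Ideal.Quotient.mk I (π ^ a * c) = Ideal.Quotient.mk I 1 := by
      simpa using hb
    have hmem : π ^ a * c - 1 ∈ I := Ideal.Quotient.eq.mp this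
    have hdvd1 : π ∣ π ^ a * c := (dvd_pow_self π ha1).mul_right c
    have hdvd2 : π ∣ π ^ a * c - 1 := by
      refine dvd_trans (dvd_pow_self π (Nat.one_le_iff_ne_zero.mp hn)) ?_
      exact Ideal.mem_span_singleton.mp hmem
    have : π ∣ 1 := by
      have := dvd_sub hdvd1 hdvd2
      simpa using this
    exact hπ.not_isUnit (isUnit_of_dvd_one this)
  -- Elementary matrices belong to H(m) and are invertible.
  have memH : ∀ i j : Fin d, i ≠ j → m i j = 0 →
      (1 + Matrix.single i j (1 : R)) ∈ Hm O π n d m ∧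
      IsUnit (1 + Matrix.single i j (1 : R)) := by
    intro i j hij h0
    constructor
    · intro a b
      have : (1 + Matrix.single i j (1 : R)) a b -
          (1 : Matrix (Fin d) (Fin d) R) a b = Matrix.single i j (1 : R) a b := by
        simp [Matrix.add_apply]
      rw [this]
      by_cases hab : i = a ∧ j = b
      · obtain ⟨rfl, rfl⟩ := hab
        rw [h0]
        simp [Ideal.span_singleton_one]
      · rw [Matrix.single_apply_of_ne _ _ _ _ _ hab]
        exact Ideal.zero_mem _
    · have hsq : Matrix.single i j (1 : R) * Matrix.single i j (1 : R) = 0 :=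
        Matrix.single_mul_single_of_ne _ _ _ _ (Ne.symm hij) _
      refine ⟨⟨1 + Matrix.single i j (1 : R),
        1 - Matrix.single i j (1 : R), ?_, ?_⟩, rfl⟩
      · rw [mul_sub, add_mul, add_mul, one_mul, mul_one, one_mul, hsq]
        abel
      · rw [mul_add, sub_mul, sub_mul, one_mul, mul_one, one_mul, hsq]
        abel
  -- The crucial composition fact.
  have keyC : ∀ i j k : Fin d, i ≠ j → j ≠ k → m i j = 0 → m j k = 0 → m i k = 0 := by
    intro i j k hij hjk h1 h2
    have hg := memH i j hij h1
    have hh := memH j k hjk h2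
    have hprod := hmul _ _ hg.1 hg.2 hh.1 hh.2
    have hentry := hprod i k
    -- compute the (i,k) entry of the product minus identity
    have hexp : (1 + Matrix.single i j (1 : R)) *
        (1 + Matrix.single j k (1 : R)) =
        1 + Matrix.single i j (1 : R) + Matrix.single j k (1 : R) +
          Matrix.single i k (1 : R) := by
      rw [mul_add, add_mul, add_mul, one_mul, mul_one, one_mul,
        Matrix.single_mul_single_same, one_mul]
      abel
    rw [hexp] at hentry
    have hik1 : Matrix.single i j (1 : R) i k = 0 := by
      apply Matrix.single_apply_of_ne
      rintro ⟨-, rfl⟩; exact hjk rfl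
    have hik2 : Matrix.single j k (1 : R) i k = 0 := by
      apply Matrix.single_apply_of_ne
      rintro ⟨rfl, -⟩; exact hij rfl
    have hval : (1 + Matrix.single i j (1 : R) + Matrix.single j k (1 : R) +
        Matrix.single i k (1 : R)) i k - (1 : Matrix (Fin d) (Fin d) R) i k
        = (1 : R) := by
      simp [Matrix.add_apply, hik1, hik2, Matrix.single_apply_same]
    rw [hval] at hentry
    exact keyA _ hentry
  -- transitivity of the preorder relation
  have T0 : ∀ i j k : Fin d, (i = j ∨ m i j = 0) → (j = k ∨ m j k = 0) →
      (i = k ∨ m i k = 0) := by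
    intro i j k hij hjk
    rcases hij with rfl | hij
    · exact hjk
    rcases hjk with rfl | hjk
    · exact Or.inr hij
    by_cases hik : i = k
    · exact Or.inl hik
    by_cases hij' : i = j
    · subst hij'; exact Or.inr hjk
    by_cases hjk' : j = k
    · subst hjk'; exact Or.inr hij
    exact Or.inr (keyC i j k hij' hjk' hij hjk)
  have heqv : Equivalence (fun i j : Fin d => i = j ∨ (m i j = 0 ∧ m j i = 0)) := by
    constructor
    · intro i; exact Or.inl rfl
    · intro i j h
      rcases h with rfl | ⟨h1, h2⟩
      · exact Or.inl rfl
      · exact Or.inr ⟨h2, h1⟩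
    · intro i j k hij hjk
      have h1 : i = k ∨ m i k = 0 := by
        apply T0 i j k
        · rcases hij with rfl | ⟨h, _⟩
          · exact Or.inl rfl
          · exact Or.inr h
        · rcases hjk with rfl | ⟨h, _⟩
          · exact Or.inl rfl
          · exact Or.inr h
      have h2 : k = i ∨ m k i = 0 := by
        apply T0 k j i
        · rcases hjk with rfl | ⟨_, h⟩
          · exact Or.inl rfl
          · exact Or.inr h
        · rcases hij with rfl | ⟨_, h⟩
          · exact Or.inl rfl
          · exact Or.inr h
      rcases h1 with rfl | h1
      · exact Or.inl rfl
      rcases h2 with rfl | h2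
      · exact Or.inl rfl
      exact Or.inr ⟨h1, h2⟩
  refine ⟨heqv, ?_⟩
  set s : Setoid (Fin d) :=
    Setoid.mk (fun i j : Fin d => i = j ∨ (m i j = 0 ∧ m j i = 0)) heqv with hs
  -- the underlying relation is well-defined on the quotient
  have hrel : ∀ a b : Fin d, s.r a b → (a = b ∨ m a b = 0) ∧ (b = a ∨ m b a = 0) := by
    intro a b hab
    rcases hab with rfl | ⟨h1, h2⟩
    · exact ⟨Or.inl rfl, Or.inl rfl⟩
    · exact ⟨Or.inr h1, Or.inr h2⟩
  have hwd : ∀ (a b c e : Fin d), s.r a c → s.r b e →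
      ((a = b ∨ m a b = 0) = (c = e ∨ m c e = 0)) := by
    intro a b c e hac hbe
    apply propext
    constructor
    · intro h
      exact T0 c e e (T0 c b e (T0 c a b (hrel a c hac).2 h) (hrel b e hbe).1) (Or.inl rfl)
    · intro h
      exact T0 a b b (T0 a e b (T0 a c e (hrel a c hac).1 h) (hrel b e hbe).2) (Or.inl rfl)
  refine ⟨Quotient.lift₂ (fun i j : Fin d => i = j ∨ m i j = 0) hwd, ?_, ?_, ?_⟩
  · intro i j
    exact Iff.rfl
  · refine { refl := ?_, trans := ?_, antisymm := ?_ }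
    · intro x
      induction x using Quotient.ind with
      | _ a => exact Or.inl rfl
    · intro x y z
      induction x using Quotient.ind with
      | _ a =>
        induction y using Quotient.ind with
        | _ b =>
          induction z using Quotient.ind with
          | _ c => exact T0 a b c
    · intro x y
      induction x using Quotient.ind with
      | _ a =>
        induction y using Quotient.ind with
        | _ b =>
          intro hab hba
          apply Quotient.sound
          rcases hab with rfl | hab
          · exact Or.inl rfl
          rcases hba with rfl | hba
          · exact Or.inl rfl
          exact Or.inr ⟨hab, hba⟩
  · intro i hii j hj
    rcases hj with rfl | ⟨h1, h2⟩
    · rfl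
    by_cases hij : j = i
    · exact hij
    · exfalso
      have := keyC i j i (fun h => hij h.symm) hij h1 h2
      omega
end
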